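/- Let P = (S, 𝓛) be a thick nondegenerate polar space of rank at least 3 and let W be a proper subspace of P contained in some hyperplane of P. Then the relation ∥ᵗ (the transitive closure of ∥*) is reflexive on the set of affine lines of D(P, W): K ∥ᵗ K for every affine line K. -/

import Mathlib

namespace PolarComp

variable {S : Type*}

/-- A partial linear space: every line has at least two points, and two
distinct lines share at most one point. -/
def IsPLS (𝓛 : Set (Set S)) : Prop :=
  (∀ l ∈ 𝓛, ∃ a b : S, a ≠ b ∧ a ∈ l ∧ b ∈ l) ∧
  (∀ l ∈ 𝓛, ∀ m ∈ 𝓛, l ≠ m → ∀ a b : S, a ∈ l ∩ m → b ∈ l ∩ m → a = b)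

/-- Thick: every line has at least three points. -/
def Thick (𝓛 : Set (Set S)) : Prop :=
  ∀ l ∈ 𝓛, ∃ a b c : S, a ≠ b ∧ a ≠ c ∧ b ≠ c ∧ a ∈ l ∧ b ∈ l ∧ c ∈ l

/-- Two points are collinear iff they lie on a common line (every point is
collinear with itself). -/
def Collin (𝓛 : Set (Set S)) (a b : S) : Prop :=
  a = b ∨ ∃ l ∈ 𝓛, a ∈ l ∧ b ∈ l

/-- Nondegenerate: no point is collinear with all other points. -/
def Nondegenerate (𝓛 : Set (Set S)) : Prop :=
  ∀ a : S, ∃ b : S, ¬ Collin 𝓛 a b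

/-- The one-or-all axiom: a point off a line is collinear with exactly one or
with all points of the line. -/
def OneOrAll (𝓛 : Set (Set S)) : Prop :=
  ∀ l ∈ 𝓛, ∀ a : S, a ∉ l →
    (∃! b, b ∈ l ∧ Collin 𝓛 a b) ∨ (∀ b ∈ l, Collin 𝓛 a b)

/-- A polar space is a partial linear space satisfying the one-or-all axiom. -/
def IsPolarSpace (𝓛 : Set (Set S)) : Prop := IsPLS 𝓛 ∧ OneOrAll 𝓛

/-- A subspace: contains every line meeting it in at least two points. -/
def IsSubspace (𝓛 : Set (Set S)) (X : Set S) : Prop :=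
  ∀ l ∈ 𝓛, (∃ a ∈ l ∩ X, ∃ b ∈ l ∩ X, a ≠ b) → l ⊆ X

/-- A hyperplane: a proper subspace meeting every line. -/
def IsHyperplane (𝓛 : Set (Set S)) (X : Set S) : Prop :=
  IsSubspace 𝓛 X ∧ X ≠ Set.univ ∧ ∀ l ∈ 𝓛, (l ∩ X).Nonempty

/-- A singular set: any two of its points are collinear. -/
def SingularSet (𝓛 : Set (Set S)) (X : Set S) : Prop :=
  ∀ a ∈ X, ∀ b ∈ X, Collin 𝓛 a b

/-- Rank at least `n`: there is a strictly increasing chain of `n` nonempty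
singular subspaces. -/
def RankAtLeast (𝓛 : Set (Set S)) (n : ℕ) : Prop :=
  ∃ X : Fin n → Set S, StrictMono X ∧
    ∀ i, (X i).Nonempty ∧ SingularSet 𝓛 (X i) ∧ IsSubspace 𝓛 (X i)

/-- `perp 𝓛 a` is the set of points collinear with `a`. -/
def perp (𝓛 : Set (Set S)) (a : S) : Set S := {b | Collin 𝓛 a b}

/-- The radical of `X`: `X ∩ X^⊥`. -/
def radSet (𝓛 : Set (Set S)) (X : Set S) : Set S :=
  X ∩ {a | ∀ b ∈ X, Collin 𝓛 a b}

/-- The lines of the complement `D(P, W)`. -/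
def compLines (𝓛 : Set (Set S)) (W : Set S) : Set (Set S) :=
  {K | ∃ k ∈ 𝓛, ¬ k ⊆ W ∧ K = k \ W}

/-- Two proper lines are parallel iff their closures meet in `W`. -/
def Parallel (𝓛 : Set (Set S)) (W : Set S) (K L : Set S) : Prop :=
  ∃ k ∈ 𝓛, ∃ l ∈ 𝓛, ¬ k ⊆ W ∧ ¬ l ⊆ W ∧ K = k \ W ∧ L = l \ W ∧
    (k ∩ l ∩ W).Nonempty

/-- A proper line is affine iff its closure meets `W`. -/
def IsAffineLine (𝓛 : Set (Set S)) (W : Set S) (K : Set S) : Prop :=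
  ∃ k ∈ 𝓛, ¬ k ⊆ W ∧ K = k \ W ∧ (k ∩ W).Nonempty

/-- `AtInfinity 𝓛 W K a` says that `a = K^∞`, i.e. `a` is a point of `K̄ ∩ W`. -/
def AtInfinity (𝓛 : Set (Set S)) (W : Set S) (K : Set S) (a : S) : Prop :=
  ∃ k ∈ 𝓛, ¬ k ⊆ W ∧ K = k \ W ∧ a ∈ k ∩ W

/-- A deep point of `W`: a point of `W` which is `L^∞` for no affine line `L`. -/
def IsDeepPoint (𝓛 : Set (Set S)) (W : Set S) (a : S) : Prop :=
  a ∈ W ∧ ∀ K : Set S, ¬ AtInfinity 𝓛 W K a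

/-- A plane: a minimal singular subspace containing a given line and a given
point not on that line. -/
def IsPlane (𝓛 : Set (Set S)) (X : Set S) : Prop :=
  ∃ l ∈ 𝓛, ∃ a : S, a ∉ l ∧ a ∈ X ∧ l ⊆ X ∧
    SingularSet 𝓛 X ∧ IsSubspace 𝓛 X ∧
    ∀ Y : Set S, SingularSet 𝓛 Y → IsSubspace 𝓛 Y → l ⊆ Y → a ∈ Y → Y ⊆ X → Y = X

/-- `Π^∞`: the points at infinity of a plane of the complement with closure `Pl`. -/
def planeInfinity (𝓛 : Set (Set S)) (W : Set S) (Pl : Set S) : Set S :=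
  {a | ∃ M : Set S, IsAffineLine 𝓛 W M ∧ M ⊆ Pl \ W ∧ AtInfinity 𝓛 W M a}

/-- A deep line: an improper line `L ⊆ W` which is `Π^∞` for no plane of the
complement. -/
def IsDeepLine (𝓛 : Set (Set S)) (W : Set S) (L : Set S) : Prop :=
  L ∈ 𝓛 ∧ L ⊆ W ∧
    ∀ Pl : Set S, IsPlane 𝓛 Pl → ¬ Pl ⊆ W → planeInfinity 𝓛 W Pl ≠ L

/-- The relation `∥*` on proper lines of the complement. -/
def ParStar (𝓛 : Set (Set S)) (W : Set S) (K₁ K₂ : Set S) : Prop :=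
  K₁ ∈ compLines 𝓛 W ∧ K₂ ∈ compLines 𝓛 W ∧ K₁ ∩ K₂ = ∅ ∧
    ∃ L₁ ∈ compLines 𝓛 W, ∃ L₂ ∈ compLines 𝓛 W, L₁ ≠ L₂ ∧
      (L₁ ∩ L₂).Nonempty ∧ (L₁ ∩ K₁).Nonempty ∧ (L₁ ∩ K₂).Nonempty ∧
      (L₂ ∩ K₁).Nonempty ∧ (L₂ ∩ K₂).Nonempty

/-- `∥ᵗ`: the transitive closure of `∥*`. -/
def ParT (𝓛 : Set (Set S)) (W : Set S) : Set S → Set S → Prop :=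
  Relation.TransGen (ParStar 𝓛 W)

/-- The anti-euclidean relation `~` on affine lines: `K₁ ~ K₂` iff no affine
line through a point of `K₁` is parallel to `K₂`. -/
def Tilde (𝓛 : Set (Set S)) (W : Set S) (K₁ K₂ : Set S) : Prop :=
  ∀ a ∈ K₁, ∀ M : Set S, IsAffineLine 𝓛 W M → a ∈ M → ¬ Parallel 𝓛 W M K₂

/-- `[K₁] ≡ [K₂]`: `M ~ N` and `N ~ M` for all `M ∥ K₁` and `N ∥ K₂`. -/
def EquivCls (𝓛 : Set (Set S)) (W : Set S) (K₁ K₂ : Set S) : Prop :=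
  ∀ M N : Set S, IsAffineLine 𝓛 W M → IsAffineLine 𝓛 W N →
    Parallel 𝓛 W M K₁ → Parallel 𝓛 W N K₂ → Tilde 𝓛 W M N ∧ Tilde 𝓛 W N M

/-- The parallel class of an affine line. -/
def parClass (𝓛 : Set (Set S)) (W : Set S) (L : Set S) : Set (Set S) :=
  {M | IsAffineLine 𝓛 W M ∧ Parallel 𝓛 W M L}

/-- The class of affine lines with point at infinity `w`. -/
def classAt (𝓛 : Set (Set S)) (W : Set S) (w : S) : Set (Set S) :=
  {L | IsAffineLine 𝓛 W L ∧ AtInfinity 𝓛 W L w}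

/-- A witness that the polar space embeds in a projective space `ℙ(F, V)`. -/
structure EmbeddingWitness (𝓛 : Set (Set S)) where
  F : Type
  [iF : DivisionRing F]
  V : Type
  [iV : AddCommGroup V]
  [iM : Module F V]
  f : S → Projectivization F V
  inj : Function.Injective f
  spanning : ∀ T : Submodule F V, (∀ s : S, Projectivization.submodule (f s) ≤ T) → T = ⊤
  lines2dim : ∀ l ∈ 𝓛, ∃ U : Submodule F V, Module.finrank F ↥U = 2 ∧
    f '' l = {p | ∃ v : V, ∃ hv : v ≠ 0, v ∈ U ∧ p = Projectivization.mk F v hv}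

/-- An embeddable polar space. -/
def Embeddable (𝓛 : Set (Set S)) : Prop := Nonempty (EmbeddingWitness 𝓛)

/-!
Let `k` be the closure of the affine line `K` and `w` its point in `W`. Rank at least 3 puts
every line of the polar space in a singular plane: there is a point `p ∉ k` collinear with all
of `k`, and thickness lets us take `p ∉ W`. With `m` the line `pw` and `a, b` two points of `K`,
the lines `pa` and `pb` meet in `p` and both meet `K` and `m \ W`, while `K` and `m \ W` are
disjoint because `k ∩ m = {w} ⊆ W`. Hence `K ∥* m \ W ∥* K`.
-/

section

variable {𝓛 : Set (Set S)}

lemma Collin.symm {a b : S} (h : Collin 𝓛 a b) : Collin 𝓛 b a := by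
  rcases h with rfl | ⟨l, hl, ha, hb⟩
  exacts [Or.inl rfl, Or.inr ⟨l, hl, hb, ha⟩]

lemma collin_of_mem {l : Set S} (hl : l ∈ 𝓛) {a b : S} (ha : a ∈ l) (hb : b ∈ l) :
    Collin 𝓛 a b :=
  Or.inr ⟨l, hl, ha, hb⟩

lemma Collin.exists_line {a b : S} (h : Collin 𝓛 a b) (hab : a ≠ b) :
    ∃ l ∈ 𝓛, a ∈ l ∧ b ∈ l :=
  h.resolve_left hab

lemma IsPLS.eq_of_mem_of_mem (h : IsPLS 𝓛) {l m : Set S} (hl : l ∈ 𝓛) (hm : m ∈ 𝓛)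
    (hlm : l ≠ m) {a b : S} (hal : a ∈ l) (ham : a ∈ m) (hbl : b ∈ l) (hbm : b ∈ m) :
    a = b :=
  h.2 l hl m hm hlm a b ⟨hal, ham⟩ ⟨hbl, hbm⟩

lemma IsPLS.exists_mem_ne (h : IsPLS 𝓛) {l : Set S} (hl : l ∈ 𝓛) (c : S) :
    ∃ d ∈ l, d ≠ c := by
  obtain ⟨a, b, hab, ha, hb⟩ := h.1 l hl
  by_cases hac : a = c
  · exact ⟨b, hb, fun hbc => hab (hac.trans hbc.symm)⟩
  · exact ⟨a, ha, hac⟩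

lemma Thick.exists_mem_ne_ne (h : Thick 𝓛) {l : Set S} (hl : l ∈ 𝓛) (x y : S) :
    ∃ q ∈ l, q ≠ x ∧ q ≠ y := by
  obtain ⟨a, b, c, hab, hac, hbc, ha, hb, hc⟩ := h l hl
  by_contra! hxy
  have key : ∀ q ∈ l, q = x ∨ q = y := fun q hq => (em (q = x)).imp_right (hxy q hq)
  rcases key a ha with rfl | rfl <;> rcases key b hb with rfl | rfl <;>
    rcases key c hc with rfl | rfl <;> contradiction

lemma IsSubspace.eq_of_mem {W l : Set S} (hW : IsSubspace 𝓛 W) (hl : l ∈ 𝓛) (hlW : ¬ l ⊆ W)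
    {a b : S} (ha : a ∈ l) (haW : a ∈ W) (hb : b ∈ l) (hbW : b ∈ W) : a = b := by
  by_contra hab
  exact hlW (hW l hl ⟨a, ⟨ha, haW⟩, b, ⟨hb, hbW⟩, hab⟩)

lemma OneOrAll.exists_collin (h : OneOrAll 𝓛) {l : Set S} (hl : l ∈ 𝓛) {c : S} (hc : c ∈ l)
    (p : S) : ∃ b ∈ l, Collin 𝓛 p b := by
  by_cases hp : p ∈ l
  · exact ⟨p, hp, Or.inl rfl⟩
  rcases h l hl p hp with ⟨b, hb, -⟩ | hall
  exacts [⟨b, hb⟩, ⟨c, hc, hall c hc⟩]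

lemma OneOrAll.subset_perp (h : OneOrAll 𝓛) {l : Set S} (hl : l ∈ 𝓛) {p a b : S} (hp : p ∉ l)
    (ha : a ∈ l) (hb : b ∈ l) (hab : a ≠ b) (hpa : Collin 𝓛 p a) (hpb : Collin 𝓛 p b) :
    l ⊆ perp 𝓛 p := by
  rcases h l hl p hp with ⟨u, -, hu⟩ | hall
  exacts [absurd ((hu a ⟨ha, hpa⟩).trans (hu b ⟨hb, hpb⟩).symm) hab, hall]

lemma exists_line_subset_perp_of_rankAtLeast_three (hrank : RankAtLeast 𝓛 3) :
    ∃ l ∈ 𝓛, ∃ p ∉ l, l ⊆ perp 𝓛 p := by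
  obtain ⟨X, hmono, hX⟩ := hrank
  have h01 : X 0 < X 1 := hmono (by decide)
  have h12 : X 1 < X 2 := hmono (by decide)
  obtain ⟨x, hx0⟩ := (hX 0).1
  obtain ⟨y, hy1, hy0⟩ := Set.exists_of_ssubset h01
  obtain ⟨z, hz2, hz1⟩ := Set.exists_of_ssubset h12
  have hx1 : x ∈ X 1 := h01.le hx0
  have hxy : x ≠ y := ne_of_mem_of_not_mem hx0 hy0
  obtain ⟨l, hl, hxl, hyl⟩ := ((hX 1).2.1 x hx1 y hy1).exists_line hxy
  have hlX : l ⊆ X 1 := (hX 1).2.2 l hl ⟨x, ⟨hxl, hx1⟩, y, ⟨hyl, hy1⟩, hxy⟩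
  exact ⟨l, hl, z, fun hzl => hz1 (hlX hzl), fun c hc => (hX 2).2.1 z hz2 c (h12.le (hlX hc))⟩

lemma exists_subset_perp_of_mem_inter (hpolar : IsPolarSpace 𝓛) {l k : Set S} (hl : l ∈ 𝓛)
    (hk : k ∈ 𝓛) {c : S} (hcl : c ∈ l) (hck : c ∈ k) (hP : ∃ p ∉ l, l ⊆ perp 𝓛 p) :
    ∃ q ∉ k, k ⊆ perp 𝓛 q := by
  obtain ⟨p, hpl, hlp⟩ := hP
  by_cases hlk : l = k
  · exact hlk ▸ ⟨p, hpl, hlp⟩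
  obtain ⟨d, hdl, hdc⟩ := hpolar.1.exists_mem_ne hl c
  have hdk : d ∉ k := fun hdk => hdc (hpolar.1.eq_of_mem_of_mem hl hk hlk hdl hdk hcl hck)
  have hpc : p ≠ c := (ne_of_mem_of_not_mem hcl hpl).symm
  have hpd : p ≠ d := (ne_of_mem_of_not_mem hdl hpl).symm
  by_cases hpk : p ∈ k
  · exact ⟨d, hdk, hpolar.2.subset_perp hk hdk hpk hck hpc (hlp hdl).symm
      (collin_of_mem hl hdl hcl)⟩
  rcases hpolar.2 k hk p hpk with ⟨u, -, hu⟩ | hall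
  · -- `c` is the only point of `k` collinear with `p`; the plane `⟨l, p⟩` lies in `c^⊥`, and a
    -- point `e` of its line `pd` collinear with some `b ∈ k \ {c}` is the point we want.
    have huniq : ∀ x ∈ k, Collin 𝓛 p x → x = c := fun x hx hpx =>
      (hu x ⟨hx, hpx⟩).trans (hu c ⟨hck, hlp hcl⟩).symm
    obtain ⟨n, hn, hpn, hdn⟩ := (hlp hdl).exists_line hpd
    have hcn : c ∉ n := fun hcn =>
      hdc (hpolar.1.eq_of_mem_of_mem hn hl (fun h => hpl (h ▸ hpn)) hdn hdl hcn hcl)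
    have hnc : n ⊆ perp 𝓛 c := hpolar.2.subset_perp hn hcn hpn hdn hpd (hlp hcl).symm
      (collin_of_mem hl hcl hdl)
    obtain ⟨b, hbk, hbc⟩ := hpolar.1.exists_mem_ne hk c
    obtain ⟨e, hen, hbe⟩ := hpolar.2.exists_collin hn hpn b
    have hek : e ∉ k := fun hek => hcn (huniq e hek (collin_of_mem hn hpn hen) ▸ hen)
    exact ⟨e, hek, hpolar.2.subset_perp hk hek hbk hck hbc hbe.symm (hnc hen).symm⟩
  · exact ⟨p, hpk, hall⟩

lemma exists_subset_perp_of_rankAtLeast_three (hpolar : IsPolarSpace 𝓛)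
    (hrank : RankAtLeast 𝓛 3) {k : Set S} (hk : k ∈ 𝓛) : ∃ p ∉ k, k ⊆ perp 𝓛 p := by
  obtain ⟨l, hl, hP⟩ := exists_line_subset_perp_of_rankAtLeast_three hrank
  obtain ⟨a, -, -, ha, -⟩ := hpolar.1.1 k hk
  obtain ⟨c, -, -, hc, -⟩ := hpolar.1.1 l hl
  obtain ⟨y, hyl, hay⟩ := hpolar.2.exists_collin hl hc a
  by_cases hya : y = a
  · exact exists_subset_perp_of_mem_inter hpolar hl hk hyl (hya ▸ ha) hP
  obtain ⟨n, hn, han, hyn⟩ := hay.exists_line (Ne.symm hya)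
  exact exists_subset_perp_of_mem_inter hpolar hn hk han ha
    (exists_subset_perp_of_mem_inter hpolar hl hn hyl hyn hP)

lemma IsSubspace.exists_subset_perp_not_mem {W k : Set S} (hW : IsSubspace 𝓛 W)
    (hpolar : IsPolarSpace 𝓛) (hthick : Thick 𝓛) (hk : k ∈ 𝓛) (hkW : ¬ k ⊆ W)
    (hP : ∃ p ∉ k, k ⊆ perp 𝓛 p) : ∃ p ∉ W, p ∉ k ∧ k ⊆ perp 𝓛 p := by
  obtain ⟨p, hpk, hkp⟩ := hP
  obtain hpW | hpW := em' (p ∈ W)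
  · exact ⟨p, hpW, hpk, hkp⟩
  -- a third point `q` of the line `ap`, `a ∈ k \ W`, is off `W` as `ap` meets `W` only in `p`
  obtain ⟨a, hak, haW⟩ := Set.not_subset.1 hkW
  have hap : a ≠ p := (ne_of_mem_of_not_mem hpW haW).symm
  obtain ⟨l, hl, hal, hpl⟩ := (hkp hak).symm.exists_line hap
  have hlk : l ≠ k := fun h => hpk (h ▸ hpl)
  obtain ⟨q, hql, hqa, hqp⟩ := hthick.exists_mem_ne_ne hl a p
  obtain ⟨b, hbk, hba⟩ := hpolar.1.exists_mem_ne hk a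
  have hbl : b ∉ l := fun hbl => hba (hpolar.1.eq_of_mem_of_mem hl hk hlk hbl hbk hal hak)
  have hlb : l ⊆ perp 𝓛 b := hpolar.2.subset_perp hl hbl hal hpl hap
    (collin_of_mem hk hbk hak) (hkp hbk).symm
  have hqk : q ∉ k := fun hqk => hqa (hpolar.1.eq_of_mem_of_mem hl hk hlk hql hqk hal hak)
  refine ⟨q, fun hqW => hqp (hW.eq_of_mem hl (fun h => haW (h hal)) hql hqW hpl hpW), hqk, ?_⟩
  exact hpolar.2.subset_perp hk hqk hak hbk hba.symm (collin_of_mem hl hql hal) (hlb hql).symm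

lemma ParStar.symm {W K₁ K₂ : Set S} (h : ParStar 𝓛 W K₁ K₂) : ParStar 𝓛 W K₂ K₁ := by
  obtain ⟨h₁, h₂, hdisj, L₁, hL₁, L₂, hL₂, hne, hL, h₁₁, h₁₂, h₂₁, h₂₂⟩ := h
  exact ⟨h₂, h₁, Set.inter_comm K₁ K₂ ▸ hdisj, L₁, hL₁, L₂, hL₂, hne, hL, h₁₂, h₁₁, h₂₂, h₂₁⟩

lemma parStar_of_collin (hpls : IsPLS 𝓛) {W k m : Set S} (hk : k ∈ 𝓛) (hm : m ∈ 𝓛)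
    {w a b p : S} (hwk : w ∈ k) (hwm : w ∈ m) (hwW : w ∈ W) (hak : a ∈ k) (hbk : b ∈ k)
    (hab : a ≠ b) (haW : a ∉ W) (hbW : b ∉ W) (hpm : p ∈ m) (hpk : p ∉ k) (hpW : p ∉ W)
    (hpa : Collin 𝓛 p a) (hpb : Collin 𝓛 p b) : ParStar 𝓛 W (k \ W) (m \ W) := by
  obtain ⟨l₁, hl₁, hpl₁, hal₁⟩ := hpa.exists_line ((ne_of_mem_of_not_mem hak hpk).symm)
  obtain ⟨l₂, hl₂, hpl₂, hbl₂⟩ := hpb.exists_line ((ne_of_mem_of_not_mem hbk hpk).symm)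
  have hkm : k ≠ m := fun h => hpk (h ▸ hpm)
  have hdisj : k \ W ∩ (m \ W) = ∅ := Set.eq_empty_of_forall_notMem fun s ⟨⟨hsk, hsW⟩, hsm, _⟩ =>
    hsW (hpls.eq_of_mem_of_mem hk hm hkm hsk hsm hwk hwm ▸ hwW)
  have hL : l₁ \ W ≠ l₂ \ W := fun h =>
    have hal₂ : a ∈ l₂ := (h ▸ ⟨hal₁, haW⟩ : a ∈ l₂ \ W).1
    hab (hpls.eq_of_mem_of_mem hl₂ hk (fun h => hpk (h ▸ hpl₂)) hal₂ hak hbl₂ hbk)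
  exact ⟨⟨k, hk, fun h => haW (h hak), rfl⟩, ⟨m, hm, fun h => hpW (h hpm), rfl⟩, hdisj,
    l₁ \ W, ⟨l₁, hl₁, fun h => haW (h hal₁), rfl⟩, l₂ \ W, ⟨l₂, hl₂, fun h => hbW (h hbl₂), rfl⟩,
    hL, ⟨p, ⟨hpl₁, hpW⟩, hpl₂, hpW⟩, ⟨a, ⟨hal₁, haW⟩, hak, haW⟩, ⟨p, ⟨hpl₁, hpW⟩, hpm, hpW⟩,
    ⟨b, ⟨hbl₂, hbW⟩, hbk, hbW⟩, ⟨p, ⟨hpl₂, hpW⟩, hpm, hpW⟩⟩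

end

theorem statement_7_general (𝓛 : Set (Set S)) (hpolar : IsPolarSpace 𝓛) (hthick : Thick 𝓛)
    (hrank : RankAtLeast 𝓛 3)
    (W : Set S) (hsub : IsSubspace 𝓛 W) :
    ∀ K : Set S, IsAffineLine 𝓛 W K → ParT 𝓛 W K K := by
  rintro _ ⟨k, hk, hkW, rfl, w, hwk, hwW⟩
  obtain ⟨p, hpW, hpk, hkp⟩ := hsub.exists_subset_perp_not_mem hpolar hthick hk hkW
    (exists_subset_perp_of_rankAtLeast_three hpolar hrank hk)
  obtain ⟨a, hak, haw⟩ := hpolar.1.exists_mem_ne hk w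
  obtain ⟨b, hbk, hbw, hba⟩ := hthick.exists_mem_ne_ne hk w a
  have haW : a ∉ W := fun h => haw (hsub.eq_of_mem hk hkW hak h hwk hwW)
  have hbW : b ∉ W := fun h => hbw (hsub.eq_of_mem hk hkW hbk h hwk hwW)
  obtain ⟨m, hm, hpm, hwm⟩ := (hkp hwk).exists_line ((ne_of_mem_of_not_mem hwk hpk).symm)
  have h := parStar_of_collin hpolar.1 hk hm hwk hwm hwW hak hbk hba.symm haW hbW hpm hpk hpW
    (hkp hak) (hkp hbk)
  exact .head h (.single h.symm)

theorem statement_7 (𝓛 : Set (Set S)) (hpolar : IsPolarSpace 𝓛) (hthick : Thick 𝓛)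
    (hnd : Nondegenerate 𝓛) (hrank : RankAtLeast 𝓛 3)
    (W : Set S) (hsub : IsSubspace 𝓛 W) (hproper : W ≠ Set.univ)
    (hhyp : ∃ H : Set S, IsHyperplane 𝓛 H ∧ W ⊆ H) :
    ∀ K : Set S, IsAffineLine 𝓛 W K → ParT 𝓛 W K K :=
  statement_7_general 𝓛 hpolar hthick hrank W hsub

end PolarComp
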